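/- For every T ≥ 1, set N = 2T + 1 and k = 2. For every Decision Maker strategy σ that is an Approval Vote strategy, there exists an approval profile sequence S : Fin T → Fin N → Finset (Fin 2) whose conflict number is at most 1, such that in the play of σ against S some agent has dissatisfaction equal to T (i.e., is dissatisfied in every round). -/

import Mathlib

open Finset

/-- The option chosen by strategy `σ` against the approval profile sequence `S`
in round `r`: `σ` applied to the history `[S 0, …, S r]`. -/
def play {k N T : ℕ} (σ : List (Fin N → Finset (Fin k)) → Fin k)
    (S : Fin T → Fin N → Finset (Fin k)) (r : Fin T) : Fin k :=
  σ (List.ofFn (fun j : Fin (r.val + 1) => S (Fin.castLE r.isLt j)))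

/-- The dissatisfaction of agent `i` in the play of `σ` against `S`:
the number of rounds in which the chosen option is not approved by `i`. -/
def dissat {k N T : ℕ} (σ : List (Fin N → Finset (Fin k)) → Fin k)
    (S : Fin T → Fin N → Finset (Fin k)) (i : Fin N) : ℕ :=
  (Finset.univ.filter fun r : Fin T => play σ S r ∉ S r i).card

/-- The conflict number of `S` is at most `C`: every subset `A` of agents of size
at most `k` is in a conflict (no option satisfies everyone in `A`) in at most `C` rounds. -/
def conflictNumberLe {k N T : ℕ} (S : Fin T → Fin N → Finset (Fin k)) (C : ℕ) : Prop :=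
  ∀ A : Finset (Fin N), A.card ≤ k →
    (Finset.univ.filter fun r : Fin T => ¬ ∃ θ : Fin k, ∀ i ∈ A, θ ∈ S r i).card ≤ C

/-- A strategy is an Approval Vote strategy if, for every (nonempty) history,
the chosen option is approved by at least as many agents in the current round's
profile as any other option. -/
def ApprovalVote {k N : ℕ} (σ : List (Fin N → Finset (Fin k)) → Fin k) : Prop :=
  ∀ (h : List (Fin N → Finset (Fin k))) (p : Fin N → Finset (Fin k)) (θ' : Fin k),
    (Finset.univ.filter fun i : Fin N => θ' ∈ p i).card ≤
      (Finset.univ.filter fun i : Fin N => σ (h ++ [p]) ∈ p i).card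

/-! Let agent `a` approve only option `1` in every round, let each other agent `i` approve only
option `0` in one round `g i` and both options otherwise. Then a set of at most two agents is in
conflict only if it is `{a, j}` for a `j` vetoing option `1`, and `j` does so in the single round
`g j`: the conflict number is at most `1`. If every round has at least two vetoers, option `0` has
strictly more approvals than option `1`, so Approval Vote always picks `0` and agent `a` is
dissatisfied in every round. With `2T + 1` agents, agents `2r + 1` and `2r + 2` veto in round `r`. -/

lemma exists_play_eq_append {k N T : ℕ} (σ : List (Fin N → Finset (Fin k)) → Fin k)
    (S : Fin T → Fin N → Finset (Fin k)) (r : Fin T) :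
    ∃ h, play σ S r = σ (h ++ [S r]) :=
  ⟨_, by rw [play, List.ofFn_succ', List.concat_eq_append]; rfl⟩

lemma ApprovalVote.play_eq_of_forall_card_lt {k N T : ℕ}
    {σ : List (Fin N → Finset (Fin k)) → Fin k} (hσ : ApprovalVote σ)
    {S : Fin T → Fin N → Finset (Fin k)} {r : Fin T} {θ : Fin k}
    (hθ : ∀ θ' ≠ θ, #{i | θ' ∈ S r i} < #{i | θ ∈ S r i}) :
    play σ S r = θ := by
  obtain ⟨h, hplay⟩ := exists_play_eq_append σ S r
  by_contra hne
  have hle := hσ h (S r) θ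
  rw [← hplay] at hle
  exact (hθ _ hne).not_ge hle

lemma dissat_eq_of_forall_notMem {k N T : ℕ} {σ : List (Fin N → Finset (Fin k)) → Fin k}
    {S : Fin T → Fin N → Finset (Fin k)} {i : Fin N} (h : ∀ r, play σ S r ∉ S r i) :
    dissat σ S i = T := by
  simp [dissat, h]

section VetoProfile

variable {N T : ℕ} (a : Fin N) (g : Fin N → ℕ)

def vetoProfile (r : Fin T) (i : Fin N) : Finset (Fin 2) :=
  if i = a then {1} else if g i = r then {0} else univ

variable {a g}

lemma zero_mem_vetoProfile_iff {r : Fin T} {i : Fin N} :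
    0 ∈ vetoProfile a g r i ↔ i ≠ a := by
  unfold vetoProfile; split_ifs <;> simp_all

lemma one_mem_vetoProfile_iff {r : Fin T} {i : Fin N} :
    1 ∈ vetoProfile a g r i ↔ ¬ (i ≠ a ∧ g i = r) := by
  unfold vetoProfile; split_ifs <;> simp_all

lemma conflictNumberLe_vetoProfile : conflictNumberLe (vetoProfile (T := T) a g) 1 := by
  intro A hA
  rw [card_le_one]
  simp only [mem_filter, mem_univ, true_and, not_exists, not_forall, exists_prop]
  intro r hr s hs
  obtain ⟨j, hjA, hj⟩ := hr 1
  obtain ⟨j', hj'A, hj'⟩ := hs 1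
  obtain ⟨b, hbA, hb⟩ := hr 0
  rw [one_mem_vetoProfile_iff, not_not] at hj hj'
  rw [zero_mem_vetoProfile_iff, not_not] at hb
  subst hb
  have hjj' : j = j' := by
    by_contra hne
    have hsub : {b, j, j'} ⊆ A := by simp [insert_subset_iff, *]
    have hcard : #{b, j, j'} = 3 := card_eq_three.2 ⟨b, j, j', hj.1.symm, hj'.1.symm, hne, rfl⟩
    have := card_le_card hsub
    omega
  exact Fin.ext (hj.2.symm.trans (hjj' ▸ hj'.2))

lemma card_filter_one_lt_zero {r : Fin T}
    (hveto : 1 < #{i | i ≠ a ∧ g i = r}) :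
    #{i | (1 : Fin 2) ∈ vetoProfile a g r i} < #{i | (0 : Fin 2) ∈ vetoProfile a g r i} := by
  simp only [one_mem_vetoProfile_iff, zero_mem_vetoProfile_iff]
  rw [filter_ne', card_erase_of_mem (mem_univ a)]
  have := card_filter_add_card_filter_not (s := univ) (fun i => i ≠ a ∧ g i = r)
  have : #{i | i ≠ a ∧ g i = r} ≤ #(univ : Finset (Fin N)) := card_le_univ _
  simp only [card_univ] at *
  omega

end VetoProfile

lemma ApprovalVote.dissat_vetoProfile {N T : ℕ} {σ : List (Fin N → Finset (Fin 2)) → Fin 2}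
    (hσ : ApprovalVote σ) {a : Fin N} {g : Fin N → ℕ}
    (hveto : ∀ r : Fin T, 1 < #{i | i ≠ a ∧ g i = r}) :
    dissat σ (vetoProfile (T := T) a g) a = T := by
  refine dissat_eq_of_forall_notMem fun r => ?_
  have hplay : play σ (vetoProfile a g) r = 0 :=
    hσ.play_eq_of_forall_card_lt fun θ' hθ' => by
      obtain rfl : θ' = 1 := by omega
      exact card_filter_one_lt_zero (hveto r)
  rw [hplay, zero_mem_vetoProfile_iff, not_not]

theorem approval_vote_fails_general (T : ℕ)
    (σ : List (Fin (2 * T + 1) → Finset (Fin 2)) → Fin 2)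
    (hσ : ApprovalVote σ) :
    ∃ S : Fin T → Fin (2 * T + 1) → Finset (Fin 2),
      conflictNumberLe S 1 ∧ ∃ i : Fin (2 * T + 1), dissat σ S i = T := by
  refine ⟨vetoProfile 0 fun i => (i.val - 1) / 2, conflictNumberLe_vetoProfile, 0,
    hσ.dissat_vetoProfile fun r => one_lt_card.2 ?_⟩
  refine ⟨⟨2 * r + 1, by omega⟩, ?_, ⟨2 * r + 2, by omega⟩, ?_, by simp [Fin.ext_iff]⟩ <;>
    simp only [mem_filter, mem_univ, true_and, ne_eq, Fin.ext_iff, Fin.val_zero] <;> omega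

theorem approval_vote_fails (T : ℕ) (hT : 1 ≤ T)
    (σ : List (Fin (2 * T + 1) → Finset (Fin 2)) → Fin 2)
    (hσ : ApprovalVote σ) :
    ∃ S : Fin T → Fin (2 * T + 1) → Finset (Fin 2),
      conflictNumberLe S 1 ∧ ∃ i : Fin (2 * T + 1), dissat σ S i = T :=
  approval_vote_fails_general T σ hσ
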